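/- Let f = x⁴ + y⁴ + z⁴ + x²y²z² in ℚ[x,y,z]. The derivation θ₁ = (−(1/32)x³y³z² − (1/16)xyz⁴ − (1/4)xy)·∂x + (−(1/32)x²y⁴z² + (1/8)x²z² − (1/4)y²)·∂y + (−(1/4)yz)·∂z satisfies θ₁(f) = −((1/8)x²y³z² + y)·f; in particular θ₁ is a logarithmic derivation with respect to the divisor D = (f = 0). -/
import Mathlib


open MvPolynomial

noncomputable section

/-- The polynomial ring ℚ[x,y,z]. -/
abbrev R3 : Type := MvPolynomial (Fin 3) ℚ

def x : R3 := X 0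
def y : R3 := X 1
def z : R3 := X 2

/-- f = x⁴ + y⁴ + z⁴ + x²y²z². -/
def f : R3 := x ^ 4 + y ^ 4 + z ^ 4 + x ^ 2 * y ^ 2 * z ^ 2

/-- θ₁ = (−(1/32)x³y³z² − (1/16)xyz⁴ − (1/4)xy)·∂x
        + (−(1/32)x²y⁴z² + (1/8)x²z² − (1/4)y²)·∂y + (−(1/4)yz)·∂z. -/
def θ₁ : Derivation ℚ R3 R3 :=
  mkDerivation ℚ
    ![-(C (1/32 : ℚ) * x ^ 3 * y ^ 3 * z ^ 2) - C (1/16 : ℚ) * x * y * z ^ 4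
        - C (1/4 : ℚ) * x * y,
      -(C (1/32 : ℚ) * x ^ 2 * y ^ 4 * z ^ 2) + C (1/8 : ℚ) * x ^ 2 * z ^ 2
        - C (1/4 : ℚ) * y ^ 2,
      -(C (1/4 : ℚ) * y * z)]

theorem theta1_logarithmic :
    θ₁ f = -(C (1/8 : ℚ) * x ^ 2 * y ^ 3 * z ^ 2 + y) * f ∧
      ∃ a : R3, θ₁ f = a * f := by
  have h16 : (C (1/16 : ℚ) : R3) = 2 * C (1/32 : ℚ) := by
    rw [show (1/16 : ℚ) = 2 * (1/32) by norm_num, map_mul, map_ofNat]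
  have h8 : (C (1/8 : ℚ) : R3) = 4 * C (1/32 : ℚ) := by
    rw [show (1/8 : ℚ) = 4 * (1/32) by norm_num, map_mul, map_ofNat]
  have h4 : (C (1/4 : ℚ) : R3) = 8 * C (1/32 : ℚ) := by
    rw [show (1/4 : ℚ) = 8 * (1/32) by norm_num, map_mul, map_ofNat]
  have h : θ₁ f = -(C (1/8 : ℚ) * x ^ 2 * y ^ 3 * z ^ 2 + y) * f := by
    simp only [f, θ₁, x, y, z, map_add, Derivation.leibniz_pow, Derivation.leibniz,
      mkDerivation_X, Matrix.cons_val_zero, Matrix.cons_val_one, Matrix.head_cons,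
      Matrix.cons_val_two, Matrix.tail_cons, smul_eq_mul, nsmul_eq_mul, h16, h8, h4]
    have h1 : (C (1/32 : ℚ) : R3) * 32 = 1 := by
      rw [show (32 : R3) = C (32 : ℚ) by rw [map_ofNat], ← map_mul]
      norm_num
    push_cast
    linear_combination (-(X 0 ^ 2 * X 1 ^ 3 * X 2 ^ 2) - X 0 ^ 4 * X 1 - X 1 * X 2 ^ 4
      - X 1 ^ 5 : R3) * h1
  exact ⟨h, _, h⟩

end
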